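/- arXiv:2201.06394 — 2 statements merged into one kernel-verified Lean document; each statement's English description precedes it below -/
import Mathlib

section
/- (Superpoly recovery) Let f : 𝔽₂ⁿ × 𝔽₂^m → 𝔽₂ be a Boolean function given as a composition f = f_{r-1} ∘ f_{r-2} ∘ ⋯ ∘ f_0, where the input of f_0 is the concatenation (x,k) ∈ 𝔽₂^{n+m} and f_{r-1} is 𝔽₂-valued. Fix an index set I ⊆ {0,…,n-1} and let u ∈ 𝔽₂ⁿ satisfy u_I = 𝟏 and u_{I^c} = 𝟎. For w ∈ 𝔽₂^m, let k^w x^u ⋈ f denote the set of monomial trails from π_{(u,w)}((x,k)) to f, i.e., trails (u_0 = (u,w), u_1, …, u_{r-1}, 1) through f_0, …, f_{r-1} ending at the monomial of the one-dimensional output. Then the superpoly Coe(f, x^u), defined as the Boolean function of k whose ANF is ⊕_{w : a_f(u,w)=1} k^w (where a_f are the ANF coefficients of f in the joint variables (x,k)), satisfies Coe(f, x^u) = ⊕_{w : |k^w x^u ⋈ f| ≡ 1 (mod 2)} k^w. -/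
open Finset

section Core

variable {α : Type*}

/-- The monomial `x^u` over `𝔽₂`. -/
def monom [Fintype α] (u x : α → ZMod 2) : ZMod 2 :=
  ∏ i, if u i = 1 then x i else 1

/-- The ANF coefficient of the monomial `x^u` in `f`, via Möbius inversion. -/
def anf [Fintype α] [DecidableEq α] (f : (α → ZMod 2) → ZMod 2) (u : α → ZMod 2) : ZMod 2 :=
  ∑ v ∈ Finset.univ.filter (fun v : α → ZMod 2 => ∀ i, v i = 1 → u i = 1), f v

/-- Hamming weight. -/
def wt [Fintype α] (u : α → ZMod 2) : ℕ :=
  (Finset.univ.filter (fun i => u i = 1)).card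

/-- Algebraic degree, in `ℤ ∪ {-∞}`. -/
def deg [Fintype α] [DecidableEq α] (f : (α → ZMod 2) → ZMod 2) : WithBot ℤ :=
  (Finset.univ.filter (fun u : α → ZMod 2 => anf f u = 1)).sup
    (fun u => ((wt u : ℤ) : WithBot ℤ))

/-- Combine an assignment on `I` with one on `Iᶜ` to a full assignment. -/
def combine [Fintype α] [DecidableEq α] (I : Finset α) (w : ↥I → ZMod 2)
    (y : ↥Iᶜ → ZMod 2) : α → ZMod 2 :=
  fun i => if h : i ∈ I then w ⟨i, h⟩ else y ⟨i, Finset.mem_compl.mpr h⟩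

/-- The coefficient function `g_{f,w}` of `x_I^w` in `f`, a Boolean function of `x_{Iᶜ}`. -/
def coeffFun [Fintype α] [DecidableEq α] (f : (α → ZMod 2) → ZMod 2) (I : Finset α)
    (w : ↥I → ZMod 2) : (↥Iᶜ → ZMod 2) → ZMod 2 :=
  fun y => ∑ t : ↥Iᶜ → ZMod 2, anf f (combine I w t) * monom t y

/-- The vector degree of `f` w.r.t. the index set `I`. -/
def vdeg [Fintype α] [DecidableEq α] (f : (α → ZMod 2) → ZMod 2) (I : Finset α)
    (w : ↥I → ZMod 2) : WithBot ℤ :=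
  deg (coeffFun f I w)

/-- `f` with the variables outside `S` set to `0`. -/
def restrict0 [Fintype α] [DecidableEq α] (f : (α → ZMod 2) → ZMod 2) (S : Finset α) :
    (α → ZMod 2) → ZMod 2 :=
  fun x => f (fun i => if i ∈ S then x i else 0)

/-- Combine an assignment on `I₁` with one on `I₂ \ I₁` to an assignment on `I₂`. -/
def joinFn [DecidableEq α] {I₁ I₂ : Finset α} (w : ↥I₁ → ZMod 2)
    (w' : ↥(I₂ \ I₁) → ZMod 2) : ↥I₂ → ZMod 2 :=
  fun j => if h : (j : α) ∈ I₁ then w ⟨(j : α), h⟩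
           else w' ⟨(j : α), Finset.mem_sdiff.mpr ⟨j.2, h⟩⟩

end Core

/-- Coordinatewise OR of the family `W i`, over indices `i` with `u i = 1`. -/
def orFam {n : ℕ} {β : Type*} (u : Fin n → ZMod 2) (W : Fin n → β → ZMod 2) :
    β → ZMod 2 :=
  fun j => if ∃ i, u i = 1 ∧ W i j = 1 then 1 else 0

/-- The vector numeric mapping `VDEG_d(f, V)`. -/
def VDEG {n : ℕ} {δ : Type*} [Fintype δ] [DecidableEq δ]
    (f : (Fin n → ZMod 2) → ZMod 2) (V : Fin n → (δ → ZMod 2) → WithBot ℤ)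
    (w : δ → ZMod 2) : WithBot ℤ :=
  (Finset.univ.filter (fun p : (Fin n → ZMod 2) × (Fin n → δ → ZMod 2) =>
      anf f p.1 = 1 ∧ (∀ i, p.1 i = 0 → p.2 i = 0) ∧ w = orFam p.1 p.2)).sup
    (fun p => ∑ i ∈ Finset.univ.filter (fun i => p.1 i = 1), V i (p.2 i))

/-- Monomial transition `π_u(x) → π_v(g(x))`. -/
def MonTrans {a b : ℕ} (g : (Fin a → ZMod 2) → (Fin b → ZMod 2))
    (u : Fin a → ZMod 2) (v : Fin b → ZMod 2) : Prop :=
  anf (fun x => monom v (g x)) u = 1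

/-- Monomial trails from level `a` to level `b`, with fixed endpoints `u`, `v`
(trails are normalized to be `0` outside the levels `a, …, b`). -/
def Trails (n : ℕ → ℕ) (f : ∀ i, (Fin (n i) → ZMod 2) → (Fin (n (i + 1)) → ZMod 2))
    (a b : ℕ) (u : Fin (n a) → ZMod 2) (v : Fin (n b) → ZMod 2) :
    Set (∀ i, Fin (n i) → ZMod 2) :=
  {t | t a = u ∧ t b = v ∧ (∀ i, a ≤ i → i < b → MonTrans (f i) (t i) (t (i + 1))) ∧
       (∀ i, i < a → t i = fun _ => 0) ∧ (∀ i, b < i → t i = fun _ => 0)}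

/-- The iterated composition `f_{b-1} ∘ ⋯ ∘ f_a` (meaningful for `a ≤ b`). -/
def iterComp (n : ℕ → ℕ) (f : ∀ i, (Fin (n i) → ZMod 2) → (Fin (n (i + 1)) → ZMod 2))
    (a : ℕ) : (b : ℕ) → (Fin (n a) → ZMod 2) → (Fin (n b) → ZMod 2)
  | 0 => fun x j => if h : a = 0 then x (Fin.cast (show n 0 = n a by rw [h]) j) else 0
  | b + 1 =>
      if h : a = b + 1 then fun x j => x (Fin.cast (show n (b + 1) = n a by rw [h]) j)
      else fun x => f b (iterComp n f a b x)

section Iterated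

/-- Embed an index set `J ⊆ {0,…,n-1}` into the joint index set of size `n' 0 = n + m`. -/
def liftJ {n m N0 : ℕ} (h0 : N0 = n + m) (J : Finset (Fin n)) : Finset (Fin N0) :=
  J.image (fun (j : Fin n) => (⟨j.val, by have := j.isLt; omega⟩ : Fin N0))

/-- Set the `x`-variables outside `S` to zero in a joint assignment. -/
def mask0 {n m N0 : ℕ} (h0 : N0 = n + m) (S : Finset (Fin n)) (z : Fin N0 → ZMod 2) :
    Fin N0 → ZMod 2 :=
  fun i => if h : (i : ℕ) < n then (if (⟨(i : ℕ), h⟩ : Fin n) ∈ S then z i else 0) else z i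

/-- The iterated estimated vector degrees `V_t^S`. -/
def Vt {n m : ℕ} (n' : ℕ → ℕ) (h0 : n' 0 = n + m)
    (f : ∀ t, (Fin (n' t) → ZMod 2) → (Fin (n' (t + 1)) → ZMod 2))
    (J S : Finset (Fin n)) :
    (t : ℕ) → Fin (n' (t + 1)) → (↥(liftJ h0 J) → ZMod 2) → WithBot ℤ
  | 0 => fun i => vdeg (fun z => f 0 (mask0 h0 S z) i) (liftJ h0 J)
  | t + 1 => fun i => VDEG (fun y => f (t + 1) y i) (Vt n' h0 f J S t)

/-- The estimated vector degree `vdeg-hat^S` (here `r = s + 2`). -/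
def vdegHat {n m : ℕ} (n' : ℕ → ℕ) (h0 : n' 0 = n + m)
    (f : ∀ t, (Fin (n' t) → ZMod 2) → (Fin (n' (t + 1)) → ZMod 2))
    (J : Finset (Fin n)) (s : ℕ) (S : Finset (Fin n)) :
    (↥(liftJ h0 J) → ZMod 2) → WithBot ℤ :=
  VDEG (fun y => monom (fun _ => 1) (f (s + 1) y)) (Vt n' h0 f J S s)

/-- The estimated degree `deg-hat^S`. -/
noncomputable def degHat {n m : ℕ} (n' : ℕ → ℕ) (h0 : n' 0 = n + m)
    (f : ∀ t, (Fin (n' t) → ZMod 2) → (Fin (n' (t + 1)) → ZMod 2))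
    (J : Finset (Fin n)) (s : ℕ) (S : Finset (Fin n)) : WithBot ℤ :=
  Finset.univ.sup (fun w : ↥(liftJ h0 J) → ZMod 2 =>
    vdegHat n' h0 f J s S w + ((wt w : ℤ) : WithBot ℤ))

end Iterated

section ANFLemmas

variable {α : Type*} [Fintype α] [DecidableEq α]

lemma zmod2_cases (c : ZMod 2) : c = 0 ∨ c = 1 := by revert c; decide

lemma zmod2_ne_one {c : ZMod 2} (h : ¬ c = 1) : c = 0 := by
  rcases zmod2_cases c with h' | h' <;> simp_all

lemma monom_self (v : α → ZMod 2) : monom v v = 1 := by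
  unfold monom
  apply Finset.prod_eq_one
  intro i _
  split_ifs with h <;> simp [h]

lemma monom_eq_zero {u x : α → ZMod 2} {i : α} (hu : u i = 1) (hx : x i = 0) :
    monom u x = 0 := by
  unfold monom
  apply Finset.prod_eq_zero (Finset.mem_univ i)
  rw [if_pos hu, hx]

lemma monom_update {x : α → ZMod 2} {i : α} (hx : x i = 1) (u : α → ZMod 2) (c : ZMod 2) :
    monom (Function.update u i c) x = monom u x := by
  unfold monom
  apply Finset.prod_congr rfl
  intro j _
  by_cases hj : j = i
  · subst hj; rw [Function.update_self, hx]; split_ifs <;> rfl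
  · rw [Function.update_of_ne hj]

lemma monom_update_arg {v : α → ZMod 2} {i : α} (h : ¬ v i = 1) (w : α → ZMod 2)
    (c : ZMod 2) : monom v (Function.update w i c) = monom v w := by
  unfold monom
  apply Finset.prod_congr rfl
  intro j _
  by_cases hj : j = i
  · subst hj; rw [if_neg h, if_neg h]
  · rw [Function.update_of_ne hj]

-- helper: extract differing index
lemma exists_diff {u v : α → ZMod 2} (hle : ∀ i, v i = 1 → u i = 1) (hne : u ≠ v) :
    ∃ i, u i = 1 ∧ v i = 0 := by
  by_contra hc
  push_neg at hc
  apply hne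
  funext i
  rcases zmod2_cases (u i) with h | h <;> rcases zmod2_cases (v i) with h' | h' <;>
    simp_all [hle i, hc i]

lemma sum_monom_superset (v x : α → ZMod 2) :
    ∑ u ∈ Finset.univ.filter (fun u : α → ZMod 2 => ∀ i, v i = 1 → u i = 1), monom u x
      = if x = v then 1 else 0 := by
  by_cases hxv : x = v
  · rw [if_pos hxv]
    subst hxv
    rw [Finset.sum_eq_single x]
    · exact monom_self x
    · intro u hu hne
      obtain ⟨i, h1, h0⟩ := exists_diff (Finset.mem_filter.mp hu).2 hne
      exact monom_eq_zero h1 h0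
    · intro h
      exact absurd (Finset.mem_filter.mpr ⟨Finset.mem_univ _, fun i hi => hi⟩) h
  · rw [if_neg hxv]
    by_cases hvx : ∀ i, v i = 1 → x i = 1
    · obtain ⟨i, hx1, hv0⟩ := exists_diff hvx hxv
      apply Finset.sum_involution (fun u _ => Function.update u i (u i + 1))
      · intro u _
        rw [monom_update hx1]
        exact CharTwo.add_self_eq_zero _
      · intro u _ _ hcon
        have := congrFun hcon i
        rw [Function.update_self] at this
        rcases zmod2_cases (u i) with h | h <;> rw [h] at this <;> exact absurd this (by decide)
      · intro u _
        funext j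
        by_cases hji : j = i
        · subst hji
          rw [Function.update_self, Function.update_self]
          rcases zmod2_cases (u j) with h | h <;> rw [h] <;> decide
        · rw [Function.update_of_ne hji, Function.update_of_ne hji]
      · intro u hu
        simp only [Finset.mem_filter, Finset.mem_univ, true_and] at hu ⊢
        intro j hj
        by_cases hji : j = i
        · subst hji; rw [hv0] at hj; exact absurd hj (by decide)
        · rw [Function.update_of_ne hji]; exact hu j hj
    · push_neg at hvx
      obtain ⟨i, hv1, hx0⟩ := hvx
      apply Finset.sum_eq_zero
      intro u hu
      exact monom_eq_zero ((Finset.mem_filter.mp hu).2 i hv1) (zmod2_ne_one hx0)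

end ANFLemmas
section ANFLemmas2

variable {α : Type*} [Fintype α] [DecidableEq α]

lemma anf_monom (v u : α → ZMod 2) :
    anf (fun x => monom v x) u = if u = v then 1 else 0 := by
  unfold anf
  by_cases huv : u = v
  · rw [if_pos huv]
    subst huv
    rw [Finset.sum_eq_single u]
    · exact monom_self u
    · intro w hw hne
      obtain ⟨i, h1, h0⟩ := exists_diff (Finset.mem_filter.mp hw).2 (Ne.symm hne)
      -- h1 : u i = 1, h0 : w i = 0
      exact monom_eq_zero h1 h0
    · intro h
      exact absurd (Finset.mem_filter.mpr ⟨Finset.mem_univ _, fun i hi => hi⟩) h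
  · rw [if_neg huv]
    by_cases hvu : ∀ i, v i = 1 → u i = 1
    · obtain ⟨i, hu1, hv0⟩ := exists_diff hvu huv
      apply Finset.sum_involution (fun w _ => Function.update w i (w i + 1))
      · intro w _
        rw [monom_update_arg (by rw [hv0]; decide)]
        exact CharTwo.add_self_eq_zero _
      · intro w _ _ hcon
        have := congrFun hcon i
        rw [Function.update_self] at this
        rcases zmod2_cases (w i) with h | h <;> rw [h] at this <;> exact absurd this (by decide)
      · intro w _
        funext j
        by_cases hji : j = i
        · subst hji
          rw [Function.update_self, Function.update_self]
          rcases zmod2_cases (w j) with h | h <;> rw [h] <;> decide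
        · rw [Function.update_of_ne hji, Function.update_of_ne hji]
      · intro w hw
        simp only [Finset.mem_filter, Finset.mem_univ, true_and] at hw ⊢
        intro j hj
        by_cases hji : j = i
        · subst hji; exact hu1
        · rw [Function.update_of_ne hji] at hj; exact hw j hj
    · push_neg at hvu
      obtain ⟨i, hv1, hu0⟩ := hvu
      apply Finset.sum_eq_zero
      intro w hw
      refine monom_eq_zero hv1 ?_
      rcases zmod2_cases (w i) with h | h
      · exact h
      · exact absurd ((Finset.mem_filter.mp hw).2 i h) hu0

/-- ANF expansion: every Boolean function equals the sum of its ANF monomials. -/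
lemma anf_expansion (f : (α → ZMod 2) → ZMod 2) (x : α → ZMod 2) :
    f x = ∑ u : α → ZMod 2, anf f u * monom u x := by
  have : ∑ u : α → ZMod 2, anf f u * monom u x
      = ∑ u : α → ZMod 2, ∑ v : α → ZMod 2,
          (if (∀ i, v i = 1 → u i = 1) then f v * monom u x else 0) := by
    refine Finset.sum_congr rfl fun u _ => ?_
    rw [anf, Finset.sum_mul, Finset.sum_filter]
  rw [this, Finset.sum_comm]
  have : ∀ v : α → ZMod 2,
      (∑ u : α → ZMod 2, if (∀ i, v i = 1 → u i = 1) then f v * monom u x else 0)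
        = f v * (if x = v then 1 else 0) := by
    intro v
    rw [← sum_monom_superset v x, Finset.mul_sum, Finset.sum_filter]
  simp_rw [this]
  simp [mul_ite]

/-- ANF of a composition, expanded through the intermediate variables. -/
lemma anf_comp {β : Type*} [Fintype β] [DecidableEq β]
    (F : (β → ZMod 2) → ZMod 2) (h : (α → ZMod 2) → (β → ZMod 2)) (u : α → ZMod 2) :
    anf (fun x => F (h x)) u
      = ∑ t : β → ZMod 2, anf F t * anf (fun x => monom t (h x)) u := by
  calc anf (fun x => F (h x)) u
      = ∑ w ∈ Finset.univ.filter (fun v : α → ZMod 2 => ∀ i, v i = 1 → u i = 1),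
          ∑ t : β → ZMod 2, anf F t * monom t (h w) := by
        rw [anf]
        exact Finset.sum_congr rfl fun w _ => anf_expansion F (h w)
    _ = ∑ t : β → ZMod 2,
          ∑ w ∈ Finset.univ.filter (fun v : α → ZMod 2 => ∀ i, v i = 1 → u i = 1),
            anf F t * monom t (h w) := Finset.sum_comm
    _ = ∑ t : β → ZMod 2, anf F t * anf (fun x => monom t (h x)) u := by
        refine Finset.sum_congr rfl fun t _ => ?_
        rw [← Finset.mul_sum]
        rfl

/-- ANF under a relabeling of the variables. -/
lemma anf_reindex {β : Type*} [Fintype β] [DecidableEq β] (e : α ≃ β)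
    (F : (α → ZMod 2) → ZMod 2) (u : β → ZMod 2) :
    anf (fun z : β → ZMod 2 => F (fun j => z (e j))) u
      = anf F (fun j => u (e j)) := by
  unfold anf
  rw [Finset.sum_filter, Finset.sum_filter]
  refine Fintype.sum_equiv (Equiv.arrowCongr e (Equiv.refl (ZMod 2))).symm _ _ fun v => ?_
  have hv : ∀ j, (Equiv.arrowCongr e (Equiv.refl (ZMod 2))).symm v j = v (e j) := fun j => rfl
  by_cases h : ∀ i, v i = 1 → u i = 1
  · rw [if_pos h, if_pos]
    · rfl
    · intro j hj
      exact h (e j) hj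
  · rw [if_neg h, if_neg]
    intro hc
    apply h
    intro i hi
    have := hc (e.symm i)
    simp only [hv, Equiv.apply_symm_apply] at this
    exact this hi

end ANFLemmas2
section TrailsLemmas

variable (n : ℕ → ℕ) (f : ∀ i, (Fin (n i) → ZMod 2) → (Fin (n (i + 1)) → ZMod 2))

/-- The unique length-0 trail. -/
def trail0 (u : Fin (n 0) → ZMod 2) : ∀ i, Fin (n i) → ZMod 2 :=
  fun i => if h : i = 0 then (fun j => u (Fin.cast (congrArg n h) j)) else fun _ => 0

lemma trail0_zero (u : Fin (n 0) → ZMod 2) : trail0 n u 0 = u := by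
  funext j
  simp [trail0, Fin.cast_refl]

lemma trail0_pos (u : Fin (n 0) → ZMod 2) {i : ℕ} (hi : i ≠ 0) :
    trail0 n u i = fun _ => 0 := by
  simp [trail0, hi]

/-- Extend a trail by one level, with top value `v`. -/
def extT (b : ℕ) (v : Fin (n (b + 1)) → ZMod 2) (s : ∀ i, Fin (n i) → ZMod 2) :
    ∀ i, Fin (n i) → ZMod 2 :=
  fun i => if h : i = b + 1 then (fun j => v (Fin.cast (congrArg n h) j)) else s i

lemma extT_ne {b : ℕ} {v : Fin (n (b + 1)) → ZMod 2} {s : ∀ i, Fin (n i) → ZMod 2}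
    {i : ℕ} (hi : i ≠ b + 1) : extT n b v s i = s i := by
  simp [extT, hi]

lemma extT_top {b : ℕ} (v : Fin (n (b + 1)) → ZMod 2) (s : ∀ i, Fin (n i) → ZMod 2) :
    extT n b v s (b + 1) = v := by
  funext j
  simp [extT, Fin.cast_refl]

/-- Truncate a trail to levels `≤ b`. -/
def truncT (b : ℕ) (s : ∀ i, Fin (n i) → ZMod 2) : ∀ i, Fin (n i) → ZMod 2 :=
  fun i => if i ≤ b then s i else fun _ => 0

lemma trails_zero_self (u : Fin (n 0) → ZMod 2) :
    Trails n f 0 0 u u = {trail0 n u} := by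
  ext t
  simp only [Trails, Set.mem_setOf_eq, Set.mem_singleton_iff]
  constructor
  · rintro ⟨h1, -, -, -, h5⟩
    funext i
    by_cases hi : i = 0
    · subst hi; rw [h1, trail0_zero]
    · rw [h5 i (Nat.pos_of_ne_zero hi), trail0_pos n u hi]
  · rintro rfl
    exact ⟨trail0_zero n u, trail0_zero n u, fun i _ h => absurd h (by omega),
      fun i h => absurd h (by omega), fun i hi => trail0_pos n u (by omega)⟩

lemma trails_zero_ne {u v : Fin (n 0) → ZMod 2} (h : u ≠ v) :
    Trails n f 0 0 u v = ∅ := by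
  ext t
  simp only [Trails, Set.mem_setOf_eq, Set.mem_empty_iff_false, iff_false]
  rintro ⟨h1, h2, -⟩
  exact h (h1 ▸ h2 ▸ rfl)

lemma trails_succ_eq (b : ℕ) (u : Fin (n 0) → ZMod 2) (v : Fin (n (b + 1)) → ZMod 2) :
    Trails n f 0 (b + 1) u v
      = ⋃ t : Fin (n b) → ZMod 2,
          extT n b v '' {s ∈ Trails n f 0 b u t | MonTrans (f b) t v} := by
  ext s
  simp only [Set.mem_iUnion, Set.mem_image, Set.mem_setOf_eq]
  constructor
  · rintro ⟨h1, h2, h3, -, h5⟩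
    refine ⟨s b, truncT n b s, ⟨⟨?_, ?_, ?_, ?_, ?_⟩, ?_⟩, ?_⟩
    · rw [truncT, if_pos (Nat.zero_le b)]; exact h1
    · rw [truncT, if_pos le_rfl]
    · intro i _ hib
      rw [truncT, truncT, if_pos (le_of_lt hib), if_pos (Nat.le_of_lt_succ (by omega))]
      exact h3 i (Nat.zero_le i) (by omega)
    · intro i hi; omega
    · intro i hi; rw [truncT, if_neg (by omega)]
    · have := h3 b (Nat.zero_le b) (by omega)
      rwa [h2] at this
    · funext i
      by_cases hi : i = b + 1
      · subst hi; rw [extT_top, h2]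
      · rw [extT_ne n hi, truncT]
        by_cases hib : i ≤ b
        · rw [if_pos hib]
        · rw [if_neg hib, h5 i (by omega)]
  · rintro ⟨t, ⟨s', ⟨⟨g1, g2, g3, -, g5⟩, gmt⟩, rfl⟩⟩
    refine ⟨?_, extT_top n v s', ?_, fun i hi => absurd hi (by omega), ?_⟩
    · rw [extT_ne n (by omega)]; exact g1
    · intro i _ hib
      by_cases hib' : i = b
      · subst hib'
        rw [extT_ne n (by omega), extT_top, g2]
        exact gmt
      · rw [extT_ne n (by omega), extT_ne n (by omega)]
        exact g3 i (Nat.zero_le i) (by omega)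
    · intro i hi
      rw [extT_ne n (by omega)]
      exact g5 i (by omega)

lemma trails_finite (b : ℕ) (u : Fin (n 0) → ZMod 2) :
    ∀ v, (Trails n f 0 b u v).Finite := by
  induction b with
  | zero =>
    intro v
    by_cases h : u = v
    · subst h; rw [trails_zero_self]; exact Set.finite_singleton _
    · rw [trails_zero_ne n f h]; exact Set.finite_empty
  | succ b ih =>
    intro v
    rw [trails_succ_eq]
    apply Set.finite_iUnion
    intro t
    exact ((ih t).subset (Set.sep_subset _ _)).image _

lemma ncard_biUnion' {ι β : Type*} (s : Finset ι) (T : ι → Set β)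
    (hfin : ∀ a ∈ s, (T a).Finite)
    (hdisj : ∀ x ∈ s, ∀ y ∈ s, x ≠ y → Disjoint (T x) (T y)) :
    (⋃ a ∈ s, T a).ncard = ∑ a ∈ s, (T a).ncard := by
  classical
  induction s using Finset.induction_on with
  | empty => simp
  | @insert a s ha ih =>
    rw [Finset.set_biUnion_insert, Finset.sum_insert ha,
      Set.ncard_union_eq ?_ (hfin a (Finset.mem_insert_self a s)) ?_,
      ih (fun x hx => hfin x (Finset.mem_insert_of_mem hx))
        (fun x hx y hy hxy => hdisj x (Finset.mem_insert_of_mem hx)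
          y (Finset.mem_insert_of_mem hy) hxy)]
    · simp only [Set.disjoint_iUnion_right]
      intro x hx
      exact hdisj a (Finset.mem_insert_self a s) x (Finset.mem_insert_of_mem hx)
        (fun h => ha (h ▸ hx))
    · exact Set.Finite.biUnion s.finite_toSet
        (fun x hx => hfin x (Finset.mem_insert_of_mem hx))

lemma extT_injOn (b : ℕ) (u : Fin (n 0) → ZMod 2) (t : Fin (n b) → ZMod 2)
    (v : Fin (n (b + 1)) → ZMod 2) :
    Set.InjOn (extT n b v) {s ∈ Trails n f 0 b u t | MonTrans (f b) t v} := by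
  rintro s₁ ⟨⟨-, -, -, -, h₁⟩, -⟩ s₂ ⟨⟨-, -, -, -, h₂⟩, -⟩ h
  funext i
  by_cases hi : i = b + 1
  · subst hi
    rw [h₁ (b + 1) (by omega), h₂ (b + 1) (by omega)]
  · have := congrFun h i
    rwa [extT_ne n hi, extT_ne n hi] at this

lemma ncard_trails_succ (b : ℕ) (u : Fin (n 0) → ZMod 2) (v : Fin (n (b + 1)) → ZMod 2) :
    (((Trails n f 0 (b + 1) u v).ncard : ZMod 2))
      = ∑ t : Fin (n b) → ZMod 2,
          anf (fun y => monom v (f b y)) t * ((Trails n f 0 b u t).ncard : ZMod 2) := by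
  classical
  rw [trails_succ_eq]
  have hU : (⋃ t : Fin (n b) → ZMod 2,
        extT n b v '' {s ∈ Trails n f 0 b u t | MonTrans (f b) t v})
      = ⋃ t ∈ (Finset.univ : Finset (Fin (n b) → ZMod 2)),
          extT n b v '' {s ∈ Trails n f 0 b u t | MonTrans (f b) t v} := by
    simp
  rw [hU, ncard_biUnion']
  · rw [Nat.cast_sum]
    refine Finset.sum_congr rfl fun t _ => ?_
    by_cases hmt : MonTrans (f b) t v
    · have hset : {s ∈ Trails n f 0 b u t | MonTrans (f b) t v} = Trails n f 0 b u t := by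
        ext s; simp [hmt]
      rw [Set.ncard_image_of_injOn (extT_injOn n f b u t v), hset, hmt, one_mul]
    · have hset : {s ∈ Trails n f 0 b u t | MonTrans (f b) t v} = (∅ : Set _) := by
        ext s; simp [hmt]
      have h0 : anf (fun y => monom v (f b y)) t = 0 := zmod2_ne_one hmt
      rw [hset, h0, zero_mul]
      simp
  · intro t _
    exact (((trails_finite n f b u t).subset (Set.sep_subset _ _)).image _)
  · intro t₁ _ t₂ _ hne
    rw [Set.disjoint_left]
    rintro s ⟨s₁, ⟨⟨-, hb₁, -⟩, -⟩, rfl⟩ ⟨s₂, ⟨⟨-, hb₂, -⟩, -⟩, h⟩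
    apply hne
    have := congrFun h b
    rw [extT_ne n (by omega), extT_ne n (by omega)] at this
    rw [← hb₁, ← hb₂, this]

lemma iterComp_zero' (x : Fin (n 0) → ZMod 2) : iterComp n f 0 0 x = x := by
  funext j
  simp [iterComp, Fin.cast_refl]

lemma iterComp_succ' (b : ℕ) (x : Fin (n 0) → ZMod 2) :
    iterComp n f 0 (b + 1) x = f b (iterComp n f 0 b x) := by
  simp [iterComp]

/-- The main trail-counting identity. -/
lemma card_trails (u : Fin (n 0) → ZMod 2) (b : ℕ) :
    ∀ v : Fin (n b) → ZMod 2,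
      ((Trails n f 0 b u v).ncard : ZMod 2)
        = anf (fun x => monom v (iterComp n f 0 b x)) u := by
  induction b with
  | zero =>
    intro v
    have : anf (fun x => monom v (iterComp n f 0 0 x)) u
        = anf (fun x => monom v x) u := by
      congr 1
    rw [this, anf_monom]
    by_cases h : u = v
    · subst h
      rw [trails_zero_self, Set.ncard_singleton, if_pos rfl]
      norm_num
    · rw [trails_zero_ne n f h, Set.ncard_empty, if_neg h]
      norm_num
  | succ b ih =>
    intro v
    have : anf (fun x => monom v (iterComp n f 0 (b + 1) x)) u
        = anf (fun x => monom v (f b (iterComp n f 0 b x))) u := by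
      congr 1
    rw [this, anf_comp (fun y => monom v (f b y)) (iterComp n f 0 b) u,
      ncard_trails_succ]
    exact Finset.sum_congr rfl fun t _ => by rw [ih t]

end TrailsLemmas
/-- **Superpoly recovery.** For `f = f_{r-1} ∘ ⋯ ∘ f_0` on joint input
`(x, k) ∈ 𝔽₂^{nn+mm}` (with `𝔽₂`-valued output), and `u` the indicator vector of the
ISoC `I`, the superpoly `Coe(f, x^u)` (the Boolean function of `k` whose ANF is
`⊕_{w : a_f(u,w) = 1} k^w`) equals `⊕_{w : |k^w x^u ⋈ f| odd} k^w`. -/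
theorem superpoly_recovery {nn mm : ℕ} (n' : ℕ → ℕ) (h0 : n' 0 = nn + mm)
    (r : ℕ) (hr1 : 1 ≤ r) (hr : n' r = 1)
    (f : ∀ i, (Fin (n' i) → ZMod 2) → (Fin (n' (i + 1)) → ZMod 2))
    (I : Finset (Fin nn)) (u : Fin nn → ZMod 2)
    (hu : ∀ i, u i = if i ∈ I then 1 else 0) :
    (fun k : Fin mm → ZMod 2 =>
      ∑ w ∈ Finset.univ.filter (fun w : Fin mm → ZMod 2 =>
          anf (fun z : Fin (nn + mm) → ZMod 2 =>
              monom (fun _ => 1) (iterComp n' f 0 r (fun j => z (Fin.cast h0 j))))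
            (Fin.append u w) = 1),
        monom w k) =
    (fun k : Fin mm → ZMod 2 =>
      ∑ w ∈ Finset.univ.filter (fun w : Fin mm → ZMod 2 =>
          Nat.card (Trails n' f 0 r
              (fun j => Fin.append u w (Fin.cast h0 j)) (fun _ => 1)) % 2 = 1),
        monom w k) := by
  have hpar : ∀ m : ℕ, ((m : ZMod 2) = 1) ↔ m % 2 = 1 := by
    intro m
    rw [← ZMod.natCast_mod m 2]
    have : m % 2 = 0 ∨ m % 2 = 1 := by omega
    rcases this with h | h <;> rw [h] <;> decide
  funext k
  refine Finset.sum_congr ?_ (fun _ _ => rfl)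
  ext w
  simp only [Finset.mem_filter, Finset.mem_univ, true_and]
  have key := anf_reindex (finCongr h0)
      (fun x : Fin (n' 0) → ZMod 2 => monom (fun _ => 1) (iterComp n' f 0 r x))
      (Fin.append u w)
  simp only [finCongr_apply] at key
  rw [key, ← card_trails n' f (fun j => Fin.append u w (Fin.cast h0 j)) r (fun _ => 1),
    ← Nat.card_coe_set_eq]
  exact hpar _
end

section
/- Let f be a Boolean function on n variables and J ⊆ K ⊆ I ⊆ {0,…,n-1}. For S ∈ {K, I}, let f|_{x_{S^c}=0} denote the Boolean function of the variables indexed by S obtained from f by setting all variables outside S to 0, and let vdeg_J(f|_{x_{S^c}=0}) : 𝔽₂^J → ℤ ∪ {-∞} be its vector degree w.r.t. J (the coefficient functions being Boolean functions of the variables indexed by S ∖ J). Then vdeg_J(f|_{x_{K^c}=0}) ≼ vdeg_J(f|_{x_{I^c}=0}); that is, setting more variables to zero does not increase any component of the vector degree. -/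
open Finset

section Aux

variable {α : Type*} [Fintype α] [DecidableEq α]

lemma zmod2_add_self (a : ZMod 2) : a + a = 0 := by revert a; decide

lemma zmod2_add_one_ne (a : ZMod 2) : a + 1 ≠ a := by revert a; decide

lemma zmod2_add_one_add_one (a : ZMod 2) : a + 1 + 1 = a := by revert a; decide

lemma zmod2_eq_one_of_ne_zero {a : ZMod 2} (h : a ≠ 0) : a = 1 := by revert a; decide

lemma zmod2_eq_zero_of_ne_one {a : ZMod 2} (h : a ≠ 1) : a = 0 := by revert a; decide

lemma monom_eq_ite (u x : α → ZMod 2) :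
    monom u x = if (∀ i, u i = 1 → x i = 1) then 1 else 0 := by
  unfold monom
  split
  · rename_i h
    exact Finset.prod_eq_one (fun i _ => by split <;> [exact h i ‹_›; rfl])
  · rename_i h
    push_neg at h
    obtain ⟨i, hu, hx⟩ := h
    exact Finset.prod_eq_zero (Finset.mem_univ i)
      (by rw [if_pos hu]; exact zmod2_eq_zero_of_ne_one hx)

lemma sum_monom (t' t : α → ZMod 2) :
    (∑ v ∈ Finset.univ.filter (fun v : α → ZMod 2 => ∀ i, v i = 1 → t i = 1), monom t' v)
      = if t' = t then 1 else 0 := by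
  by_cases heq : t' = t
  · subst heq
    rw [if_pos rfl]
    rw [Finset.sum_eq_single t']
    · rw [monom_eq_ite, if_pos (fun _ h => h)]
    · intro v hv hne
      rw [monom_eq_ite, if_neg]
      intro hall
      apply hne
      funext i
      by_cases h1 : v i = 1
      · rw [h1, (Finset.mem_filter.mp hv).2 i h1]
      · rw [zmod2_eq_zero_of_ne_one h1]
        by_cases h2 : t' i = 1
        · exact absurd (hall i h2) h1
        · rw [zmod2_eq_zero_of_ne_one h2]
    · intro h
      exact absurd (Finset.mem_filter.mpr ⟨Finset.mem_univ _, fun _ h => h⟩) h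
  · rw [if_neg heq]
    by_cases hle : ∀ i, t' i = 1 → t i = 1
    · have hex : ∃ j, t j = 1 ∧ t' j ≠ 1 := by
        by_contra hc
        push_neg at hc
        apply heq
        funext i
        by_cases h1 : t i = 1
        · rw [h1, hc i h1]
        · rw [zmod2_eq_zero_of_ne_one h1,
            zmod2_eq_zero_of_ne_one (fun h2 => h1 (hle i h2))]
      obtain ⟨j, htj, ht'j⟩ := hex
      apply Finset.sum_involution (g := fun v _ => Function.update v j (v j + 1))
      · intro v hv
        have : monom t' (Function.update v j (v j + 1)) = monom t' v := by
          unfold monom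
          apply Finset.prod_congr rfl
          intro i _
          by_cases hij : i = j
          · subst hij; rw [if_neg ht'j, if_neg ht'j]
          · rw [Function.update_of_ne hij]
        rw [this, zmod2_add_self]
      · intro v _ _ hc
        have := congrFun hc j
        rw [Function.update_self] at this
        exact zmod2_add_one_ne _ this
      · intro v _
        funext i
        by_cases hij : i = j
        · subst hij; rw [Function.update_self, Function.update_self, zmod2_add_one_add_one]
        · rw [Function.update_of_ne hij, Function.update_of_ne hij]
      · intro v hv
        rw [Finset.mem_filter] at hv ⊢
        refine ⟨Finset.mem_univ _, fun i hi => ?_⟩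
        by_cases hij : i = j
        · subst hij; exact htj
        · rw [Function.update_of_ne hij] at hi
          exact hv.2 i hi
    · apply Finset.sum_eq_zero
      intro v hv
      rw [monom_eq_ite, if_neg]
      intro hall
      exact hle (fun i hi => (Finset.mem_filter.mp hv).2 i (hall i hi))

lemma anf_coeffFun (f : (α → ZMod 2) → ZMod 2) (I : Finset α) (w : ↥I → ZMod 2)
    (t : ↥Iᶜ → ZMod 2) :
    anf (coeffFun f I w) t = anf f (combine I w t) := by
  have h0 : anf (coeffFun f I w) t
      = ∑ v ∈ Finset.univ.filter (fun v : ↥Iᶜ → ZMod 2 => ∀ i, v i = 1 → t i = 1),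
          ∑ t' : ↥Iᶜ → ZMod 2, anf f (combine I w t') * monom t' v := rfl
  rw [h0, Finset.sum_comm]
  simp only [← Finset.mul_sum, sum_monom, mul_ite, mul_one, mul_zero]
  simp

lemma anf_restrict0 (f : (α → ZMod 2) → ZMod 2) (S : Finset α) (u : α → ZMod 2) :
    anf (restrict0 f S) u = if (∀ i, u i = 1 → i ∈ S) then anf f u else 0 := by
  unfold anf restrict0
  split
  · rename_i h
    apply Finset.sum_congr rfl
    intro v hv
    congr 1
    funext i
    split
    · rfl
    · rename_i hiS
      by_cases h1 : v i = 1
      · exact absurd (h i ((Finset.mem_filter.mp hv).2 i h1)) hiS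
      · exact (zmod2_eq_zero_of_ne_one h1).symm
  · rename_i h
    push_neg at h
    obtain ⟨j, huj, hjS⟩ := h
    apply Finset.sum_involution (g := fun v _ => Function.update v j (v j + 1))
    · intro v hv
      have : (fun i => if i ∈ S then Function.update v j (v j + 1) i else 0)
          = (fun i => if i ∈ S then v i else 0) := by
        funext i
        by_cases hij : i = j
        · subst hij; rw [if_neg hjS, if_neg hjS]
        · rw [Function.update_of_ne hij]
      rw [this, zmod2_add_self]
    · intro v _ _ hc
      have := congrFun hc j
      rw [Function.update_self] at this
      exact zmod2_add_one_ne _ this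
    · intro v _
      funext i
      by_cases hij : i = j
      · subst hij; rw [Function.update_self, Function.update_self, zmod2_add_one_add_one]
      · rw [Function.update_of_ne hij, Function.update_of_ne hij]
    · intro v hv
      rw [Finset.mem_filter] at hv ⊢
      refine ⟨Finset.mem_univ _, fun i hi => ?_⟩
      by_cases hij : i = j
      · subst hij; exact huj
      · rw [Function.update_of_ne hij] at hi
        exact hv.2 i hi

end Aux

/-- Setting more variables to zero does not increase any component of
the vector degree: for `J ⊆ K ⊆ I`, `vdeg_J(f|_{x_{Kᶜ}=0}) ≼ vdeg_J(f|_{x_{Iᶜ}=0})`. -/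
theorem vdeg_restrict_mono {n : ℕ} (f : (Fin n → ZMod 2) → ZMod 2)
    (J K I : Finset (Fin n)) (hJK : J ⊆ K) (hKI : K ⊆ I) (w : ↥J → ZMod 2) :
    vdeg (restrict0 f K) J w ≤ vdeg (restrict0 f I) J w := by
  unfold vdeg deg
  apply Finset.sup_mono
  intro t ht
  rw [Finset.mem_filter] at ht ⊢
  obtain ⟨-, ht⟩ := ht
  rw [anf_coeffFun, anf_restrict0] at ht
  refine ⟨Finset.mem_univ _, ?_⟩
  rw [anf_coeffFun, anf_restrict0]
  split at ht
  · rename_i h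
    rw [if_pos (fun i hi => hKI (h i hi))]
    exact ht
  · exact absurd ht (by decide)
end
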